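/- arXiv:2304.04969 — 4 statements merged into one kernel-verified Lean document; each statement's English description precedes it below -/
import Mathlib

section
/- Suppose Q : ℝⁿ → Matrix (Fin m) (Fin m) ℝ is a conservative Q-matrix field admitting a family of invariant distributions μ^x, uniformly exponentially ergodic, and Lipschitz in the sense that ‖Q(x) − Q(y)‖_ℓ ≤ C|x − y| for all x, y. Let b : ℝⁿ × Fin m → ℝⁿ satisfy: (i) ⟨b(x,i) − b(y,j), x − y⟩ ≤ C|x − y|² + C|x − y| whenever i ≠ j, and ⟨b(x,i) − b(y,i), x − y⟩ ≤ C|x − y|² for all i; (ii) max_i |b(x,i)| ≤ C(1 + |x|^k) for some k > 0. Then the averaged drift b̄(x) := Σⱼ b(x,j) μ^x_j satisfies the one-sided Lipschitz (monotonicity) estimate: there exists C' > 0 with ⟨b̄(x₁) − b̄(x₂), x₁ − x₂⟩ ≤ C'|x₁ − x₂|² for all x₁, x₂ ∈ ℝⁿ. -/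
open MeasureTheory
open scoped RealInnerProductSpace

noncomputable section

/-- ℓ-norm of a matrix: `‖M‖_ℓ = max_i Σⱼ |M i j|`. -/
def lnorm {m : ℕ} (M : Matrix (Fin m) (Fin m) ℝ) : ℝ := ⨆ i, ∑ j, |M i j|

/-!
Write `d = x₁ - x₂`. By the conditions on `b`, `⟪b x₁ i - b x₂ j, d⟫` is at most `C|d|²`, plus
`C|d|` when `i ≠ j`. Coupling `μ^{x₁}` with `μ^{x₂}` so that they agree on their overlap
`min (μ^{x₁}_i) (μ^{x₂}_i)`, the pairs with `i ≠ j` carry mass at most the total variation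
distance `|μ^{x₁} - μ^{x₂}|₁`, so `⟪b̄ x₁ - b̄ x₂, d⟫ ≤ C|d|² + C|d| |μ^{x₁} - μ^{x₂}|₁`.

It remains to see that `x ↦ μ^x` is Lipschitz in total variation. For `r = μ^x - μ^y` the
invariance equations give `r Q(y) = μ^x (Q(y) - Q(x))`, so along the semigroup `e^{s Q(y)}`, which
ergodicity bounds uniformly, `r` moves by `O(t ‖Q(x) - Q(y)‖_ℓ)` up to time `t`. Since `r` has
total mass zero, ergodicity also makes `|r e^{t Q(y)}|₁ ≤ |r|₁ / 2` once `C₀ e^{-λt} ≤ 1/2`.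
Hence `|r|₁ = O(‖Q(x) - Q(y)‖_ℓ) = O(|x - y|)`.
-/

open NormedSpace Matrix Set Filter Topology

section BanachAlgebra

variable {𝔸 : Type*} [NormedRing 𝔸] [NormedAlgebra ℝ 𝔸] [CompleteSpace 𝔸]

theorem norm_mul_exp_smul_sub_le (r a : 𝔸) {t L : ℝ} (ht : 0 ≤ t)
    (hL : ∀ s ∈ Icc 0 t, ‖exp (s • a)‖ ≤ L) :
    ‖r * exp (t • a) - r‖ ≤ ‖r * a‖ * L * t := by
  have hderiv (s : ℝ) : HasDerivAt (fun s : ℝ => r * exp (s • a)) (r * a * exp (s • a)) s := by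
    simpa only [mul_assoc] using (hasDerivAt_exp_smul_const' a s).const_mul r
  have hbound (s : ℝ) (hs : s ∈ Ico 0 t) : ‖r * a * exp (s • a)‖ ≤ ‖r * a‖ * L :=
    (norm_mul_le _ _).trans <| by gcongr; exact hL s (Ico_subset_Icc_self hs)
  simpa using norm_image_sub_le_of_norm_deriv_le_segment'
    (fun s _ => (hderiv s).hasDerivWithinAt) hbound t ⟨ht, le_rfl⟩

theorem one_sub_mul_norm_le_of_mul_eq_zero (r a π : 𝔸) {t L ε : ℝ} (ht : 0 ≤ t)
    (hL : ∀ s ∈ Icc 0 t, ‖exp (s • a)‖ ≤ L) (hrπ : r * π = 0) (hε : ‖exp (t • a) - π‖ ≤ ε) :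
    (1 - ε) * ‖r‖ ≤ ‖r * a‖ * L * t := by
  have hcontract : ‖r * exp (t • a)‖ ≤ ‖r‖ * ε :=
    calc ‖r * exp (t • a)‖ = ‖r * (exp (t • a) - π)‖ := by rw [mul_sub, hrπ, sub_zero]
      _ ≤ ‖r‖ * ε := (norm_mul_le _ _).trans (by gcongr)
  have := norm_mul_exp_smul_sub_le r a ht hL
  have := norm_le_insert (r * exp (t • a)) r
  linarith

end BanachAlgebra

namespace Matrix

open scoped Matrix.Norms.Operator

variable {ι κ α : Type*} [Fintype ι] [Fintype κ] [SeminormedAddCommGroup α]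

theorem linfty_opNorm_le_iff {A : Matrix ι κ α} {r : ℝ} (hr : 0 ≤ r) :
    ‖A‖ ≤ r ↔ ∀ i, ∑ j, ‖A i j‖ ≤ r := by
  lift r to NNReal using hr
  simp only [← coe_nnnorm, NNReal.coe_le_coe, linfty_opNNNorm_def, Finset.sup_le_iff,
    Finset.mem_univ, true_implies, ← NNReal.coe_sum]

theorem linfty_opNorm_replicateRow_of_nonempty [Nonempty ι] (v : κ → α) :
    ‖replicateRow ι v‖ = ∑ j, ‖v j‖ := by
  simp [linfty_opNorm_def, Finset.sup_const Finset.univ_nonempty]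

end Matrix

section Ergodic

open scoped Matrix.Norms.Operator

theorem lnorm_eq_norm {m : ℕ} (M : Matrix (Fin m) (Fin m) ℝ) : lnorm M = ‖M‖ := by
  have hrow := (Matrix.linfty_opNorm_le_iff (A := M) (norm_nonneg _)).1 le_rfl
  simp only [Real.norm_eq_abs] at hrow
  refine le_antisymm (Real.iSup_le hrow (norm_nonneg _)) ?_
  refine (Matrix.linfty_opNorm_le_iff (Real.iSup_nonneg fun i => by positivity)).2 ?_
  simpa only [Real.norm_eq_abs] using le_ciSup (Finite.bddAbove_range fun i => ∑ j, |M i j|)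

variable {ι : Type*} [Fintype ι] [DecidableEq ι] [Nonempty ι]

/- A probability vector `ν` enters as the matrix `replicateRow ι ν`, all of whose rows are `ν`: it
is the limit of `exp (t • B)`, and its ℓ∞-operator norm is the ℓ¹ norm of `ν`. -/
theorem one_sub_mul_sum_abs_sub_le {A B : Matrix ι ι ℝ} {μ ν : ι → ℝ}
    (hμ : ∀ i, 0 ≤ μ i) (hμsum : ∑ i, μ i = 1) (hνsum : ∑ i, ν i = 1)
    (hμA : μ ᵥ* A = 0) (hνB : ν ᵥ* B = 0) {t L ε : ℝ} (ht : 0 ≤ t)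
    (hL : ∀ s ∈ Icc 0 t, ‖exp (s • B)‖ ≤ L) (hε : ‖exp (t • B) - replicateRow ι ν‖ ≤ ε) :
    (1 - ε) * ∑ i, |μ i - ν i| ≤ ‖A - B‖ * L * t := by
  have hann : replicateRow ι (μ - ν) * replicateRow ι ν = 0 := by
    ext i j
    simp [Matrix.mul_apply, ← Finset.sum_mul, Finset.sum_sub_distrib, hμsum, hνsum]
  have hdrift : replicateRow ι (μ - ν) * B = replicateRow ι μ * (B - A) := by
    rw [← replicateRow_vecMul, ← replicateRow_vecMul, sub_vecMul, vecMul_sub, hνB, hμA]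
  have hμnorm : ‖replicateRow ι μ‖ = 1 := by
    simp [linfty_opNorm_replicateRow_of_nonempty, abs_of_nonneg (hμ _), hμsum]
  have hLt : 0 ≤ L * t := mul_nonneg ((norm_nonneg _).trans (hL 0 ⟨le_rfl, ht⟩)) ht
  calc (1 - ε) * ∑ i, |μ i - ν i| = (1 - ε) * ‖replicateRow ι (μ - ν)‖ := by
        simp [linfty_opNorm_replicateRow_of_nonempty]
    _ ≤ ‖replicateRow ι (μ - ν) * B‖ * L * t :=
        one_sub_mul_norm_le_of_mul_eq_zero _ _ _ ht hL hann hε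
    _ ≤ ‖A - B‖ * L * t := by
        rw [mul_assoc, mul_assoc, hdrift]
        gcongr
        simpa [hμnorm, norm_sub_rev] using norm_mul_le (replicateRow ι μ) (B - A)

theorem exists_sum_abs_sub_le_mul_norm_sub {X : Type*} {C₀ lam : ℝ} (hC₀ : 0 ≤ C₀)
    (hlam : 0 < lam) (Q : X → Matrix ι ι ℝ) (μ : X → ι → ℝ) (hμ : ∀ x i, 0 ≤ μ x i)
    (hμsum : ∀ x, ∑ i, μ x i = 1) (hμinv : ∀ x, μ x ᵥ* Q x = 0)
    (herg : ∀ x i (t : ℝ), 0 ≤ t →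
      ∑ j, |exp (t • Q x) i j - μ x j| ≤ C₀ * Real.exp (-lam * t)) :
    ∃ K, 0 ≤ K ∧ ∀ x y, ∑ i, |μ x i - μ y i| ≤ K * ‖Q x - Q y‖ := by
  obtain ⟨t, hhalf, ht⟩ : ∃ t, C₀ * Real.exp (-lam * t) ≤ 1 / 2 ∧ 0 ≤ t := by
    have : Tendsto (fun t => C₀ * Real.exp (-lam * t)) atTop (𝓝 0) := by
      simpa using (Real.tendsto_exp_neg_atTop_nhds_zero.comp
        (tendsto_id.const_mul_atTop hlam)).const_mul C₀
    exact ((this.eventually (ge_mem_nhds one_half_pos)).and (eventually_ge_atTop 0)).exists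
  have hrelax (x : X) (s : ℝ) (hs : 0 ≤ s) :
      ‖exp (s • Q x) - replicateRow ι (μ x)‖ ≤ C₀ * Real.exp (-lam * s) :=
    (linfty_opNorm_le_iff (by positivity)).2 fun i => by simpa using herg x i s hs
  have hbdd (x : X) (s : ℝ) (hs : s ∈ Icc 0 t) : ‖exp (s • Q x)‖ ≤ C₀ + 1 := by
    have hexp : Real.exp (-lam * s) ≤ 1 :=
      Real.exp_le_one_iff.2 (mul_nonpos_of_nonpos_of_nonneg (by linarith) hs.1)
    calc ‖exp (s • Q x)‖
        ≤ ‖exp (s • Q x) - replicateRow ι (μ x)‖ + ‖replicateRow ι (μ x)‖ :=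
          norm_le_norm_sub_add _ _
      _ ≤ C₀ * 1 + 1 := by
          gcongr
          · exact (hrelax x s hs.1).trans (by gcongr)
          · simp [linfty_opNorm_replicateRow_of_nonempty, abs_of_nonneg (hμ x _), hμsum]
      _ = C₀ + 1 := by ring
  refine ⟨2 * ((C₀ + 1) * t), by positivity, fun x y => ?_⟩
  have := one_sub_mul_sum_abs_sub_le (hμ x) (hμsum x) (hμsum y) (hμinv x) (hμinv y) ht
    (hbdd y) ((hrelax y t ht).trans hhalf)
  linarith

end Ergodic

section Coupling

open Finset

variable {ι : Type*} [Fintype ι]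

theorem sum_mul_sub_sum_mul_le_of_sum_eq {p q u z : ι → ℝ} {M : ℝ} (hp : ∀ i, 0 ≤ p i)
    (hq : ∀ i, 0 ≤ q i) (hpq : ∑ i, p i = ∑ i, q i) (h : ∀ i j, u i - z j ≤ M) :
    ∑ i, p i * u i - ∑ j, q j * z j ≤ (∑ i, p i) * M := by
  have hs : 0 ≤ ∑ i, p i := sum_nonneg fun i _ => hp i
  rcases hs.eq_or_lt with hs0 | hspos
  · have hp0 := (sum_eq_zero_iff_of_nonneg fun i _ => hp i).1 hs0.symm
    have hq0 := (sum_eq_zero_iff_of_nonneg fun i _ => hq i).1 (hpq ▸ hs0.symm)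
    simp [hp0, hq0]
  -- the product coupling `p i * q j / ∑ p` has marginals `p` and `q`
  have hpair : ∑ i, ∑ j, p i * q j * (u i - z j)
      = (∑ i, p i) * (∑ i, p i * u i - ∑ j, q j * z j) := by
    conv_rhs => rw [mul_sub]; enter [1, 1]; rw [hpq]
    simp only [mul_sub, sum_sub_distrib, sum_mul_sum]
    rw [sum_comm (f := fun i j => q i * (p j * u j))]
    congr 1 <;> exact sum_congr rfl fun _ _ => sum_congr rfl fun _ _ => by ring
  have hM : ∑ i, ∑ j, p i * q j * M = (∑ i, p i) * ((∑ i, p i) * M) := by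
    simp_rw [mul_assoc]
    rw [← sum_mul_sum, ← sum_mul, ← hpq]
  refine le_of_mul_le_mul_left ?_ hspos
  rw [← hpair, ← hM]
  exact sum_le_sum fun i _ => sum_le_sum fun j _ =>
    mul_le_mul_of_nonneg_left (h i j) (mul_nonneg (hp i) (hq j))

theorem sum_mul_sub_sum_mul_le {μ ν u z : ι → ℝ} {B D : ℝ} (hμ : ∀ i, 0 ≤ μ i)
    (hν : ∀ i, 0 ≤ ν i) (hμν : ∑ i, μ i = ∑ i, ν i) (hD : 0 ≤ D)
    (hdiag : ∀ i, u i - z i ≤ B) (hoff : ∀ i j, i ≠ j → u i - z j ≤ B + D) :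
    ∑ i, μ i * u i - ∑ i, ν i * z i ≤ (∑ i, μ i) * B + (∑ i, |μ i - ν i|) * D := by
  set ω := fun i => min (μ i) (ν i)
  have hsplit : ∑ i, μ i * u i - ∑ i, ν i * z i = ∑ i, ω i * (u i - z i)
      + (∑ i, (μ i - ω i) * u i - ∑ i, (ν i - ω i) * z i) := by
    simp only [mul_sub, sub_mul, sum_sub_distrib]; ring
  have hoverlap : ∑ i, ω i * (u i - z i) ≤ (∑ i, ω i) * B := by
    rw [sum_mul]
    exact sum_le_sum fun i _ => mul_le_mul_of_nonneg_left (hdiag i) (le_min (hμ i) (hν i))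
  have hexcess := sum_mul_sub_sum_mul_le_of_sum_eq (M := B + D) (u := u) (z := z)
    (fun i => sub_nonneg.2 (min_le_left (μ i) (ν i)))
    (fun i => sub_nonneg.2 (min_le_right (μ i) (ν i))) (by simp only [sum_sub_distrib, hμν])
    fun i j => by
      rcases eq_or_ne i j with rfl | hij
      · linarith [hdiag i]
      · exact hoff i j hij
  have hmass : ∑ i, (μ i - ω i) ≤ ∑ i, |μ i - ν i| :=
    sum_le_sum fun i _ => by rcases le_total (μ i) (ν i) with h | h <;> simp [ω, h, le_abs_self]
  have := mul_le_mul_of_nonneg_right hmass hD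
  simp only [sum_sub_distrib] at hexcess this
  linarith
  
end Coupling

theorem averaged_drift_monotone_general {n m : ℕ} (C₀ lam C : ℝ)
    (hC₀ : 0 < C₀) (hlam : 0 < lam) (hC : 0 < C)
    (Q : EuclideanSpace ℝ (Fin n) → Matrix (Fin m) (Fin m) ℝ)
    (μ : EuclideanSpace ℝ (Fin n) → Fin m → ℝ)
    (hμpos : ∀ x i, 0 < μ x i)
    (hμsum : ∀ x, ∑ i, μ x i = 1)
    (hμinv : ∀ x j, ∑ i, μ x i * Q x i j = 0)
    (herg : ∀ x i (t : ℝ), 0 ≤ t →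
      ∑ j, |NormedSpace.exp (t • Q x) i j - μ x j| ≤ C₀ * Real.exp (-lam * t))
    -- Q is Lipschitz in the ℓ-norm
    (hQlip : ∀ x y, lnorm (Q x - Q y) ≤ C * ‖x - y‖)
    (b : EuclideanSpace ℝ (Fin n) → Fin m → EuclideanSpace ℝ (Fin n))
    -- (i) one-sided Lipschitz conditions on b
    (hb₁ : ∀ x y (i j : Fin m), i ≠ j →
      ⟪b x i - b y j, x - y⟫ ≤ C * ‖x - y‖ ^ 2 + C * ‖x - y‖)
    (hb₂ : ∀ x y (i : Fin m), ⟪b x i - b y i, x - y⟫ ≤ C * ‖x - y‖ ^ 2) :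
    ∃ C' > 0, ∀ x₁ x₂ : EuclideanSpace ℝ (Fin n),
      ⟪(∑ j, μ x₁ j • b x₁ j) - ∑ j, μ x₂ j • b x₂ j, x₁ - x₂⟫
        ≤ C' * ‖x₁ - x₂‖ ^ 2 := by
  have : Nonempty (Fin m) := by
    obtain ⟨i, -, -⟩ := Finset.exists_ne_zero_of_sum_ne_zero ((hμsum 0).trans_ne one_ne_zero)
    exact ⟨i⟩
  obtain ⟨K, hK, hTV⟩ := exists_sum_abs_sub_le_mul_norm_sub hC₀.le hlam Q μ
    (fun x i => (hμpos x i).le) hμsum (fun x => funext (hμinv x)) herg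
  refine ⟨C + K * C * C, by positivity, fun x₁ x₂ => ?_⟩
  have hTV₁₂ : ∑ j, |μ x₁ j - μ x₂ j| ≤ K * (C * ‖x₁ - x₂‖) :=
    (hTV x₁ x₂).trans (by rw [← lnorm_eq_norm]; gcongr; exact hQlip x₁ x₂)
  calc ⟪(∑ j, μ x₁ j • b x₁ j) - ∑ j, μ x₂ j • b x₂ j, x₁ - x₂⟫
      = ∑ j, μ x₁ j * ⟪b x₁ j, x₁ - x₂⟫ - ∑ j, μ x₂ j * ⟪b x₂ j, x₁ - x₂⟫ := by
        simp only [inner_sub_left, sum_inner, real_inner_smul_left]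
    _ ≤ (∑ j, μ x₁ j) * (C * ‖x₁ - x₂‖ ^ 2) + (∑ j, |μ x₁ j - μ x₂ j|) * (C * ‖x₁ - x₂‖) :=
        sum_mul_sub_sum_mul_le (fun j => (hμpos x₁ j).le) (fun j => (hμpos x₂ j).le)
          (by rw [hμsum, hμsum]) (by positivity)
          (fun j => by simpa only [← inner_sub_left] using hb₂ x₁ x₂ j)
          (fun i j hij => by simpa only [← inner_sub_left] using hb₁ x₁ x₂ i j hij)
    _ ≤ 1 * (C * ‖x₁ - x₂‖ ^ 2) + K * (C * ‖x₁ - x₂‖) * (C * ‖x₁ - x₂‖) := by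
        rw [hμsum]; gcongr
    _ = (C + K * C * C) * ‖x₁ - x₂‖ ^ 2 := by ring

/-- The averaged drift `b̄(x) := Σⱼ b(x,j) μ^x_j` inherits the one-sided Lipschitz
(monotonicity) estimate `⟨b̄(x₁) − b̄(x₂), x₁ − x₂⟩ ≤ C'|x₁ − x₂|²`. -/
theorem averaged_drift_monotone {n m : ℕ} (C₀ lam C : ℝ)
    (hC₀ : 0 < C₀) (hlam : 0 < lam) (hC : 0 < C)
    (Q : EuclideanSpace ℝ (Fin n) → Matrix (Fin m) (Fin m) ℝ)
    (μ : EuclideanSpace ℝ (Fin n) → Fin m → ℝ)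
    (hQoff : ∀ x i j, i ≠ j → 0 ≤ Q x i j)
    (hQrow : ∀ x i, ∑ j, Q x i j = 0)
    (hμpos : ∀ x i, 0 < μ x i)
    (hμsum : ∀ x, ∑ i, μ x i = 1)
    (hμinv : ∀ x j, ∑ i, μ x i * Q x i j = 0)
    (herg : ∀ x i (t : ℝ), 0 ≤ t →
      ∑ j, |NormedSpace.exp (t • Q x) i j - μ x j| ≤ C₀ * Real.exp (-lam * t))
    -- Q is Lipschitz in the ℓ-norm
    (hQlip : ∀ x y, lnorm (Q x - Q y) ≤ C * ‖x - y‖)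
    (b : EuclideanSpace ℝ (Fin n) → Fin m → EuclideanSpace ℝ (Fin n))
    -- (i) one-sided Lipschitz conditions on b
    (hb₁ : ∀ x y (i j : Fin m), i ≠ j →
      ⟪b x i - b y j, x - y⟫ ≤ C * ‖x - y‖ ^ 2 + C * ‖x - y‖)
    (hb₂ : ∀ x y (i : Fin m), ⟪b x i - b y i, x - y⟫ ≤ C * ‖x - y‖ ^ 2)
    -- (ii) polynomial growth of b
    (k : ℝ) (hk : 0 < k)
    (hb₃ : ∀ x i, ‖b x i‖ ≤ C * (1 + ‖x‖ ^ k)) :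
    ∃ C' > 0, ∀ x₁ x₂ : EuclideanSpace ℝ (Fin n),
      ⟪(∑ j, μ x₁ j • b x₁ j) - ∑ j, μ x₂ j • b x₂ j, x₁ - x₂⟫
        ≤ C' * ‖x₁ - x₂‖ ^ 2 :=
  averaged_drift_monotone_general C₀ lam C hC₀ hlam hC Q μ hμpos hμsum hμinv herg hQlip b hb₁ hb₂

end
end

section
/- Let ρ : ℝⁿ → [0,1] be a smooth function with ∫_{ℝⁿ} ρ(z) dz = 1 and ∫_{ℝⁿ} |z|^j ρ(z) dz < ∞ for every j ∈ ℕ. For N ∈ ℕ₊ set ρ^N(z) := N^n ρ(Nz). Let S be a finite type and H : ℝⁿ × S → ℝⁿ satisfy, for some constants C, k > 0 and all x, y: max_i |H(x,i) − H(y,i)| ≤ C(1 + |x|^k + |y|^k)|x − y| and max_i |H(x,i)| ≤ C(1 + |x|^k). Define the mollification H_N(x,i) := ∫_{ℝⁿ} H(x − z, i) ρ^N(z) dz. Then there is a constant C' > 0, independent of N and x, such that for all N ∈ ℕ₊ and all x: max_i |H(x,i) − H_N(x,i)| ≤ C'(1 + |x|^k) N^{−1} and max_i |H_N(x,i)| ≤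 C'(1 + |x|^k). -/
open MeasureTheory

noncomputable section

/-- The mollification `H_N(x,i) := ∫ H(x−z,i) ρ^N(z) dz` with `ρ^N(z) = N^n ρ(Nz)`. -/
def mollify {n : ℕ} {S : Type*} (ρ : EuclideanSpace ℝ (Fin n) → ℝ)
    (H : EuclideanSpace ℝ (Fin n) → S → EuclideanSpace ℝ (Fin n)) (N : ℕ)
    (x : EuclideanSpace ℝ (Fin n)) (i : S) : EuclideanSpace ℝ (Fin n) :=
  ∫ z, ((N : ℝ) ^ n * ρ ((N : ℝ) • z)) • H (x - z) i

/-- `(a+b)^k ≤ 2^k (a^k + b^k)` for nonnegative reals and exponent. -/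
lemma aux_rpow_add {k : ℝ} (hk : 0 ≤ k) {a b : ℝ} (ha : 0 ≤ a) (hb : 0 ≤ b) :
    (a + b) ^ k ≤ 2 ^ k * (a ^ k + b ^ k) := by
  rcases le_total a b with h | h
  · calc (a + b) ^ k ≤ (2 * b) ^ k := Real.rpow_le_rpow (by linarith) (by linarith) hk
      _ = 2 ^ k * b ^ k := Real.mul_rpow (by norm_num) hb
      _ ≤ 2 ^ k * (a ^ k + b ^ k) := by
          nlinarith [Real.rpow_nonneg ha k, Real.rpow_nonneg (le_of_lt (two_pos (α := ℝ))) k]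
  · calc (a + b) ^ k ≤ (2 * a) ^ k := Real.rpow_le_rpow (by linarith) (by linarith) hk
      _ = 2 ^ k * a ^ k := Real.mul_rpow (by norm_num) ha
      _ ≤ 2 ^ k * (a ^ k + b ^ k) := by
          nlinarith [Real.rpow_nonneg hb k, Real.rpow_nonneg (le_of_lt (two_pos (α := ℝ))) k]

/-- `a^k ≤ 1 + a^m` for `0 ≤ k ≤ m`, `a ≥ 0`. -/
lemma aux_rpow_le_pow {a k : ℝ} (m : ℕ) (ha : 0 ≤ a) (hk : 0 ≤ k) (hkm : k ≤ (m : ℝ)) :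
    a ^ k ≤ 1 + a ^ m := by
  rcases le_total a 1 with h | h
  · have h1 : a ^ k ≤ 1 := Real.rpow_le_one ha h hk
    nlinarith [pow_nonneg ha m]
  · have h1 : a ^ k ≤ a ^ (m : ℝ) := Real.rpow_le_rpow_of_exponent_le h hkm
    rw [Real.rpow_natCast] at h1
    nlinarith

set_option maxHeartbeats 2000000 in
/-- Approximation estimates for the mollification of a locally Lipschitz function of
polynomial growth: `max_i |H(x,i) − H_N(x,i)| ≤ C'(1+|x|^k)N⁻¹` and
`max_i |H_N(x,i)| ≤ C'(1+|x|^k)`. -/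
theorem mollify_approximation {n : ℕ} {S : Type*} [Fintype S]
    (ρ : EuclideanSpace ℝ (Fin n) → ℝ)
    (hρ01 : ∀ z, ρ z ∈ Set.Icc (0:ℝ) 1)
    (hρsmooth : ContDiff ℝ (⊤ : ℕ∞) ρ)
    (hρint : ∫ z, ρ z = 1)
    (hρmom : ∀ j : ℕ, Integrable fun z => ‖z‖ ^ j * ρ z)
    (H : EuclideanSpace ℝ (Fin n) → S → EuclideanSpace ℝ (Fin n))
    (C k : ℝ) (hC : 0 < C) (hk : 0 < k)
    (hHlip : ∀ x y i, ‖H x i - H y i‖ ≤ C * (1 + ‖x‖ ^ k + ‖y‖ ^ k) * ‖x - y‖)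
    (hHgrow : ∀ x i, ‖H x i‖ ≤ C * (1 + ‖x‖ ^ k)) :
    ∃ C' > 0, ∀ (N : ℕ), 0 < N → ∀ x i,
      ‖H x i - mollify ρ H N x i‖ ≤ C' * (1 + ‖x‖ ^ k) * (N : ℝ)⁻¹ ∧
      ‖mollify ρ H N x i‖ ≤ C' * (1 + ‖x‖ ^ k) := by
  classical
  have _Edummy : True := trivial
  have hρnn : ∀ z, 0 ≤ ρ z := fun z => (hρ01 z).1
  have hρcont : Continuous ρ := hρsmooth.continuous
  -- moments of ρ
  set M : ℕ → ℝ := fun j => ∫ z : EuclideanSpace ℝ (Fin n), ‖z‖ ^ j * ρ z with hM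
  have hMnn : ∀ j, 0 ≤ M j := fun j =>
    integral_nonneg fun z => mul_nonneg (pow_nonneg (norm_nonneg _) _) (hρnn z)
  have hM0 : M 0 = 1 := by
    simp only [hM, pow_zero, one_mul]; exact hρint
  -- the exponent cap
  set m : ℕ := ⌈k⌉₊ with hm
  have hkm : k ≤ (m : ℝ) := Nat.le_ceil k
  -- 2^k
  set P : ℝ := 2 ^ k with hP
  have hPpos : (0:ℝ) < P := Real.rpow_pos_of_pos two_pos k
  -- the constant
  set K : ℝ := C * (1 + P) * (1 + M m) * (1 + M 1 + M (m + 1)) with hK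
  have hMm := hMnn m
  have hM1 := hMnn 1
  have hMm1 := hMnn (m + 1)
  have c0 : (0:ℝ) ≤ C * (1 + P) := by nlinarith
  have hKpos : 0 < K := by
    rw [hK]
    have h1 : (0:ℝ) < 1 + M m := by linarith
    have h2 : (0:ℝ) < 1 + M 1 + M (m + 1) := by linarith
    have h3 : (0:ℝ) < 1 + P := by linarith
    exact mul_pos (mul_pos (mul_pos hC h3) h1) h2
  have hKnn : 0 ≤ K := le_of_lt hKpos
  refine ⟨2 * K, by linarith, ?_⟩
  intro N hN x i
  set X : ℝ := ‖x‖ ^ k with hX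
  have hXnn : 0 ≤ X := Real.rpow_nonneg (norm_nonneg _) k
  set Nr : ℝ := (N : ℝ) with hNr
  have hNr1 : 1 ≤ Nr := by rw [hNr]; exact_mod_cast hN
  have hNrpos : 0 < Nr := by linarith
  have hNrne : Nr ≠ 0 := ne_of_gt hNrpos
  -- the scaled mollifier
  set w : EuclideanSpace ℝ (Fin n) → ℝ := fun z => Nr ^ n * ρ (Nr • z) with hw
  have hwnn : ∀ z, 0 ≤ w z := fun z =>
    mul_nonneg (pow_nonneg (le_of_lt hNrpos) n) (hρnn _)
  have hwcont : Continuous w :=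
    continuous_const.mul (hρcont.comp (continuous_const_smul Nr))
  -- scaled moments: integrability
  have momInt : ∀ j : ℕ, Integrable fun z : EuclideanSpace ℝ (Fin n) => w z * ‖z‖ ^ j := by
    intro j
    have h2 : Integrable fun z : EuclideanSpace ℝ (Fin n) => ‖Nr • z‖ ^ j * ρ (Nr • z) :=
      (hρmom j).comp_smul hNrne
    have h3 : Integrable fun z : EuclideanSpace ℝ (Fin n) => (Nr ^ n / Nr ^ j) * (‖Nr • z‖ ^ j * ρ (Nr • z)) :=
      h2.const_mul _
    refine h3.congr ?_
    filter_upwards with z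
    rw [norm_smul, Real.norm_eq_abs, abs_of_pos hNrpos, mul_pow]
    field_simp
    ring
  have hwint : Integrable w := by
    have := momInt 0
    simpa using this
  -- scaled moments: values
  have momVal : ∀ j : ℕ, ∫ z : EuclideanSpace ℝ (Fin n), w z * ‖z‖ ^ j = (Nr ^ j)⁻¹ * M j := by
    intro j
    have key : ∫ z : EuclideanSpace ℝ (Fin n), (fun y : EuclideanSpace ℝ (Fin n) => ‖y‖ ^ j * ρ y) (Nr • z)
        = (Nr ^ Module.finrank ℝ (EuclideanSpace ℝ (Fin n)))⁻¹ • ∫ y : EuclideanSpace ℝ (Fin n), ‖y‖ ^ j * ρ y :=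
      Measure.integral_comp_smul_of_nonneg (volume : Measure (EuclideanSpace ℝ (Fin n)))
        (fun y : EuclideanSpace ℝ (Fin n) => ‖y‖ ^ j * ρ y) Nr (hR := le_of_lt hNrpos)
    have hfr : Module.finrank ℝ (EuclideanSpace ℝ (Fin n)) = n := finrank_euclideanSpace_fin
    rw [hfr] at key
    have expand : ∀ z : EuclideanSpace ℝ (Fin n), w z * ‖z‖ ^ j
        = (Nr ^ n / Nr ^ j) * ((fun y : EuclideanSpace ℝ (Fin n) => ‖y‖ ^ j * ρ y) (Nr • z)) := by
      intro z
      simp only [hw]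
      rw [norm_smul, Real.norm_eq_abs, abs_of_pos hNrpos, mul_pow]
      field_simp
    calc ∫ z : EuclideanSpace ℝ (Fin n), w z * ‖z‖ ^ j
        = ∫ z : EuclideanSpace ℝ (Fin n), (Nr ^ n / Nr ^ j) * ((fun y : EuclideanSpace ℝ (Fin n) => ‖y‖ ^ j * ρ y) (Nr • z)) := by
          congr 1; funext z; exact expand z
      _ = (Nr ^ n / Nr ^ j) * ∫ z : EuclideanSpace ℝ (Fin n), (fun y : EuclideanSpace ℝ (Fin n) => ‖y‖ ^ j * ρ y) (Nr • z) :=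
          integral_const_mul _ _
      _ = (Nr ^ n / Nr ^ j) * ((Nr ^ n)⁻¹ * M j) := by rw [key]; rw [smul_eq_mul]
      _ = (Nr ^ j)⁻¹ * M j := by
          field_simp
  have mass : ∫ z : EuclideanSpace ℝ (Fin n), w z = 1 := by
    have := momVal 0
    simpa [hM0] using this
  -- continuity of H in the first variable
  have hrk : Continuous fun a : EuclideanSpace ℝ (Fin n) => ‖a‖ ^ k := by
    rw [continuous_iff_continuousAt]
    intro a
    exact (Real.continuousAt_rpow_const _ _ (Or.inr (le_of_lt hk))).comp
      continuous_norm.continuousAt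
  have hHcont : Continuous fun a : EuclideanSpace ℝ (Fin n) => H a i := by
    rw [continuous_iff_continuousAt]
    intro a
    have hgc : Continuous fun b : EuclideanSpace ℝ (Fin n) => C * (1 + ‖b‖ ^ k + ‖a‖ ^ k) * ‖b - a‖ :=
      (continuous_const.mul ((continuous_const.add hrk).add continuous_const)).mul
        ((continuous_id.sub continuous_const).norm)
    have hg0 : Filter.Tendsto (fun b : EuclideanSpace ℝ (Fin n) => C * (1 + ‖b‖ ^ k + ‖a‖ ^ k) * ‖b - a‖)
        (nhds a) (nhds 0) := by
      have := hgc.tendsto a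
      simpa using this
    have hdiff : Filter.Tendsto (fun b : EuclideanSpace ℝ (Fin n) => H b i - H a i) (nhds a) (nhds 0) :=
      squeeze_zero_norm (fun b => hHlip b a i) hg0
    have : Filter.Tendsto (fun b : EuclideanSpace ℝ (Fin n) => (H b i - H a i) + H a i) (nhds a)
        (nhds (0 + H a i)) := hdiff.add_const _
    simpa [ContinuousAt] using this
  -- pointwise estimates on ‖x - z‖^k and ‖z‖^k
  have hxz : ∀ z : EuclideanSpace ℝ (Fin n), ‖x - z‖ ^ k ≤ P * (X + ‖z‖ ^ k) := by
    intro z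
    calc ‖x - z‖ ^ k ≤ (‖x‖ + ‖z‖) ^ k :=
          Real.rpow_le_rpow (norm_nonneg _) (norm_sub_le _ _) (le_of_lt hk)
      _ ≤ P * (X + ‖z‖ ^ k) :=
          aux_rpow_add (le_of_lt hk) (norm_nonneg _) (norm_nonneg _)
  have hzk : ∀ z : EuclideanSpace ℝ (Fin n), ‖z‖ ^ k ≤ 1 + ‖z‖ ^ m := fun z =>
    aux_rpow_le_pow m (norm_nonneg _) (le_of_lt hk) hkm
  have hzknn : ∀ z : EuclideanSpace ℝ (Fin n), 0 ≤ ‖z‖ ^ k := fun z => Real.rpow_nonneg (norm_nonneg _) k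
  -- integrability of the mollification integrand
  have hφmeas : AEStronglyMeasurable (fun z : EuclideanSpace ℝ (Fin n) => w z • H (x - z) i) volume :=
    (hwcont.smul (hHcont.comp (continuous_const.sub continuous_id))).aestronglyMeasurable
  have hG2int : Integrable fun z : EuclideanSpace ℝ (Fin n) =>
      w z * (C * (1 + P + P * X) + (C * P) * ‖z‖ ^ m) := by
    have h1 : Integrable fun z : EuclideanSpace ℝ (Fin n) => (C * (1 + P + P * X)) * (w z * ‖z‖ ^ 0) :=
      (momInt 0).const_mul _
    have h2 : Integrable fun z : EuclideanSpace ℝ (Fin n) => (C * P) * (w z * ‖z‖ ^ m) := (momInt m).const_mul _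
    refine (h1.add h2).congr ?_
    filter_upwards with z
    simp only [Pi.add_apply, hw, pow_zero, mul_one]
    ring
  have hφbound : ∀ z : EuclideanSpace ℝ (Fin n), ‖w z • H (x - z) i‖
      ≤ w z * (C * (1 + P + P * X) + (C * P) * ‖z‖ ^ m) := by
    intro z
    rw [norm_smul, Real.norm_eq_abs, abs_of_nonneg (hwnn z)]
    have h1 : ‖H (x - z) i‖ ≤ C * (1 + ‖x - z‖ ^ k) := hHgrow _ i
    have h2 := hxz z
    have h3 := hzk z
    have h4 := hzknn z
    have h5 : ‖H (x - z) i‖ ≤ C * (1 + P + P * X) + (C * P) * ‖z‖ ^ m := by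
      have e2 : C * ‖x - z‖ ^ k ≤ C * (P * (X + ‖z‖ ^ k)) :=
        mul_le_mul_of_nonneg_left h2 (le_of_lt hC)
      have e3 : (C * P) * ‖z‖ ^ k ≤ (C * P) * (1 + ‖z‖ ^ m) :=
        mul_le_mul_of_nonneg_left h3 (le_of_lt (mul_pos hC hPpos))
      nlinarith [hXnn, pow_nonneg (norm_nonneg z) m]
    exact mul_le_mul_of_nonneg_left h5 (hwnn z)
  have hφint : Integrable fun z : EuclideanSpace ℝ (Fin n) => w z • H (x - z) i :=
    Integrable.mono' hG2int hφmeas (Filter.Eventually.of_forall hφbound)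
  -- value of the dominating integral for the growth bound
  have hG2val : ∫ z : EuclideanSpace ℝ (Fin n), w z * (C * (1 + P + P * X) + (C * P) * ‖z‖ ^ m)
      = C * (1 + P + P * X) + (C * P) * ((Nr ^ m)⁻¹ * M m) := by
    have h1 : Integrable fun z : EuclideanSpace ℝ (Fin n) => (C * (1 + P + P * X)) * (w z * ‖z‖ ^ 0) :=
      (momInt 0).const_mul _
    have h2 : Integrable fun z : EuclideanSpace ℝ (Fin n) => (C * P) * (w z * ‖z‖ ^ m) := (momInt m).const_mul _
    calc ∫ z : EuclideanSpace ℝ (Fin n), w z * (C * (1 + P + P * X) + (C * P) * ‖z‖ ^ m)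
        = ∫ z : EuclideanSpace ℝ (Fin n), ((C * (1 + P + P * X)) * (w z * ‖z‖ ^ 0) + (C * P) * (w z * ‖z‖ ^ m)) := by
          congr 1; funext z; simp only [hw, pow_zero, mul_one]; ring
      _ = (C * (1 + P + P * X)) * (∫ z : EuclideanSpace ℝ (Fin n), w z * ‖z‖ ^ 0)
            + (C * P) * (∫ z : EuclideanSpace ℝ (Fin n), w z * ‖z‖ ^ m) := by
          rw [integral_add h1 h2, integral_const_mul, integral_const_mul]
      _ = C * (1 + P + P * X) + (C * P) * ((Nr ^ m)⁻¹ * M m) := by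
          rw [momVal 0, momVal m, hM0]
          simp
  -- growth bound
  have hNinvm : (Nr ^ m)⁻¹ ≤ 1 := by
    rw [inv_le_one_iff₀]
    right
    exact one_le_pow₀ hNr1
  have hCP : (0:ℝ) < C * P := mul_pos hC hPpos
  have hA : C * (1 + P) + C * P * M m ≤ K := by
    rw [hK]
    nlinarith [mul_nonneg (le_of_lt hC) hMm, mul_nonneg c0 hM1, mul_nonneg c0 hMm1,
      mul_nonneg c0 (mul_nonneg hMm hM1), mul_nonneg c0 (mul_nonneg hMm hMm1)]
  have hCPK : C * P ≤ K := by
    rw [hK]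
    nlinarith [mul_nonneg c0 hMm, mul_nonneg c0 hM1, mul_nonneg c0 hMm1,
      mul_nonneg c0 (mul_nonneg hMm hM1), mul_nonneg c0 (mul_nonneg hMm hMm1)]
  have hgrowth : ‖mollify ρ H N x i‖ ≤ 2 * K * (1 + X) := by
    have h0 : ‖mollify ρ H N x i‖
        ≤ C * (1 + P + P * X) + (C * P) * ((Nr ^ m)⁻¹ * M m) := by
      rw [show mollify ρ H N x i = ∫ z : EuclideanSpace ℝ (Fin n), w z • H (x - z) i from rfl, ← hG2val]
      exact norm_integral_le_of_norm_le hG2int (Filter.Eventually.of_forall hφbound)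
    have h6 : (C * P) * ((Nr ^ m)⁻¹ * M m) ≤ C * P * M m := by
      have h6' : (Nr ^ m)⁻¹ * M m ≤ 1 * M m := mul_le_mul_of_nonneg_right hNinvm hMm
      have := mul_le_mul_of_nonneg_left h6' (le_of_lt hCP)
      nlinarith
    have h7 : (C * P) * X ≤ K * X := mul_le_mul_of_nonneg_right hCPK hXnn
    nlinarith [mul_nonneg hKnn hXnn]
  -- difference representation
  have hwsmul : Integrable fun z : EuclideanSpace ℝ (Fin n) => w z • H x i := hwint.smul_const _
  have hdiff_rep : H x i - mollify ρ H N x i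
      = ∫ z : EuclideanSpace ℝ (Fin n), w z • (H x i - H (x - z) i) := by
    have : ∫ z : EuclideanSpace ℝ (Fin n), w z • (H x i - H (x - z) i)
        = (∫ z : EuclideanSpace ℝ (Fin n), w z • H x i) - ∫ z : EuclideanSpace ℝ (Fin n), w z • H (x - z) i := by
      rw [← integral_sub hwsmul hφint]
      congr 1; funext z; rw [smul_sub]
    rw [this, integral_smul_const, mass, one_smul]
    rfl
  -- dominating function for the difference
  set D : ℝ := C * (1 + P) * (1 + X) + C * P with hD
  have hDnn : 0 ≤ D := by
    have : 0 ≤ C * (1 + P) * (1 + X) := by positivity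
    have : 0 ≤ C * P := by positivity
    positivity
  have hGint : Integrable fun z : EuclideanSpace ℝ (Fin n) => w z * (D * ‖z‖ ^ 1 + (C * P) * ‖z‖ ^ (m + 1)) := by
    have h1 : Integrable fun z : EuclideanSpace ℝ (Fin n) => D * (w z * ‖z‖ ^ 1) := (momInt 1).const_mul _
    have h2 : Integrable fun z : EuclideanSpace ℝ (Fin n) => (C * P) * (w z * ‖z‖ ^ (m + 1)) :=
      (momInt (m + 1)).const_mul _
    refine (h1.add h2).congr ?_
    filter_upwards with z
    simp only [Pi.add_apply, hw]
    ring
  have hGbound : ∀ z : EuclideanSpace ℝ (Fin n), ‖w z • (H x i - H (x - z) i)‖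
      ≤ w z * (D * ‖z‖ ^ 1 + (C * P) * ‖z‖ ^ (m + 1)) := by
    intro z
    rw [norm_smul, Real.norm_eq_abs, abs_of_nonneg (hwnn z)]
    have h1 : ‖H x i - H (x - z) i‖ ≤ C * (1 + ‖x‖ ^ k + ‖x - z‖ ^ k) * ‖x - (x - z)‖ :=
      hHlip x (x - z) i
    rw [sub_sub_cancel] at h1
    have h2 := hxz z
    have h3 := hzk z
    have h4 := hzknn z
    have h5 : ‖H x i - H (x - z) i‖ ≤ D * ‖z‖ ^ 1 + (C * P) * ‖z‖ ^ (m + 1) := by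
      have hzn : (0:ℝ) ≤ ‖z‖ := norm_nonneg z
      have hzm : (0:ℝ) ≤ ‖z‖ ^ m := pow_nonneg hzn m
      have hpows : ‖z‖ ^ (m + 1) = ‖z‖ ^ m * ‖z‖ := pow_succ _ _
      have key : C * (1 + ‖x‖ ^ k + ‖x - z‖ ^ k) * ‖z‖
          ≤ D * ‖z‖ ^ 1 + (C * P) * ‖z‖ ^ (m + 1) := by
        rw [pow_one, hpows]
        have step : (1 + ‖x‖ ^ k + ‖x - z‖ ^ k) ≤ (1 + P) * (1 + X) + P * ‖z‖ ^ m := by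
          nlinarith [hXnn]
        calc C * (1 + ‖x‖ ^ k + ‖x - z‖ ^ k) * ‖z‖
            ≤ C * ((1 + P) * (1 + X) + P * ‖z‖ ^ m) * ‖z‖ := by
              apply mul_le_mul_of_nonneg_right _ hzn
              exact mul_le_mul_of_nonneg_left step (le_of_lt hC)
          _ = (C * (1 + P) * (1 + X)) * ‖z‖ + (C * P) * (‖z‖ ^ m * ‖z‖) := by ring
          _ ≤ D * ‖z‖ + (C * P) * (‖z‖ ^ m * ‖z‖) := by
              have : C * (1 + P) * (1 + X) ≤ D := by
                rw [hD]; nlinarith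
              nlinarith
      exact le_trans h1 key
    exact mul_le_mul_of_nonneg_left h5 (hwnn z)
  have hGval : ∫ z : EuclideanSpace ℝ (Fin n), w z * (D * ‖z‖ ^ 1 + (C * P) * ‖z‖ ^ (m + 1))
      = D * (Nr⁻¹ * M 1) + (C * P) * ((Nr ^ (m + 1))⁻¹ * M (m + 1)) := by
    have h1 : Integrable fun z : EuclideanSpace ℝ (Fin n) => D * (w z * ‖z‖ ^ 1) := (momInt 1).const_mul _
    have h2 : Integrable fun z : EuclideanSpace ℝ (Fin n) => (C * P) * (w z * ‖z‖ ^ (m + 1)) :=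
      (momInt (m + 1)).const_mul _
    calc ∫ z : EuclideanSpace ℝ (Fin n), w z * (D * ‖z‖ ^ 1 + (C * P) * ‖z‖ ^ (m + 1))
        = ∫ z : EuclideanSpace ℝ (Fin n), (D * (w z * ‖z‖ ^ 1) + (C * P) * (w z * ‖z‖ ^ (m + 1))) := by
          congr 1; funext z; simp only [hw]; ring
      _ = D * (∫ z : EuclideanSpace ℝ (Fin n), w z * ‖z‖ ^ 1)
            + (C * P) * (∫ z : EuclideanSpace ℝ (Fin n), w z * ‖z‖ ^ (m + 1)) := by
          rw [integral_add h1 h2, integral_const_mul, integral_const_mul]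
      _ = D * (Nr⁻¹ * M 1) + (C * P) * ((Nr ^ (m + 1))⁻¹ * M (m + 1)) := by
          rw [momVal 1, momVal (m + 1)]
          norm_num
  -- the difference bound
  have hNinv1 : (Nr ^ (m + 1))⁻¹ ≤ Nr⁻¹ := by
    apply inv_anti₀ hNrpos
    calc Nr = Nr ^ 1 := (pow_one _).symm
      _ ≤ Nr ^ (m + 1) := pow_le_pow_right₀ hNr1 (by omega)
  have hdifference : ‖H x i - mollify ρ H N x i‖ ≤ 2 * K * (1 + X) * Nr⁻¹ := by
    rw [hdiff_rep]
    have h0 : ‖∫ z : EuclideanSpace ℝ (Fin n), w z • (H x i - H (x - z) i)‖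
        ≤ D * (Nr⁻¹ * M 1) + (C * P) * ((Nr ^ (m + 1))⁻¹ * M (m + 1)) := by
      rw [← hGval]
      exact norm_integral_le_of_norm_le hGint (Filter.Eventually.of_forall hGbound)
    have hNinn : (0:ℝ) ≤ Nr⁻¹ := inv_nonneg.mpr (le_of_lt hNrpos)
    have h6 : (C * P) * ((Nr ^ (m + 1))⁻¹ * M (m + 1)) ≤ (C * P) * (Nr⁻¹ * M (m + 1)) := by
      have : (Nr ^ (m + 1))⁻¹ * M (m + 1) ≤ Nr⁻¹ * M (m + 1) :=
        mul_le_mul_of_nonneg_right hNinv1 hMm1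
      nlinarith
    have h7 : D * (Nr⁻¹ * M 1) + (C * P) * (Nr⁻¹ * M (m + 1))
        = (D * M 1 + (C * P) * M (m + 1)) * Nr⁻¹ := by ring
    have hB1 : C * (1 + P) * M 1 ≤ K := by
      rw [hK]
      nlinarith [mul_nonneg c0 hMm, mul_nonneg c0 hMm1,
        mul_nonneg c0 (mul_nonneg hMm hM1), mul_nonneg c0 (mul_nonneg hMm hMm1)]
    have hB2 : C * P * (M 1 + M (m + 1)) ≤ K := by
      rw [hK]
      nlinarith [mul_nonneg c0 hMm, mul_nonneg (le_of_lt hC) hM1,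
        mul_nonneg (le_of_lt hC) hMm1, mul_nonneg c0 (mul_nonneg hMm hM1),
        mul_nonneg c0 (mul_nonneg hMm hMm1)]
    have t1 : C * (1 + P) * M 1 * (1 + X) ≤ K * (1 + X) :=
      mul_le_mul_of_nonneg_right hB1 (by linarith)
    have h8 : D * M 1 + (C * P) * M (m + 1) ≤ 2 * K * (1 + X) := by
      rw [hD]
      nlinarith [mul_nonneg hKnn hXnn]
    calc ‖∫ z : EuclideanSpace ℝ (Fin n), w z • (H x i - H (x - z) i)‖
        ≤ D * (Nr⁻¹ * M 1) + (C * P) * ((Nr ^ (m + 1))⁻¹ * M (m + 1)) := h0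
      _ ≤ D * (Nr⁻¹ * M 1) + (C * P) * (Nr⁻¹ * M (m + 1)) := by linarith
      _ = (D * M 1 + (C * P) * M (m + 1)) * Nr⁻¹ := h7
      _ ≤ 2 * K * (1 + X) * Nr⁻¹ :=
          mul_le_mul_of_nonneg_right h8 hNinn
  exact ⟨hdifference, hgrowth⟩
end
end

section
/- Let Q be an m × m real matrix with q_{ij} ≥ 0 for all i ≠ j and Σⱼ q_{ij} = 0 for every i (a conservative Q-matrix), and let μ : Fin m → ℝ be a probability vector (μᵢ ≥ 0, Σᵢ μᵢ = 1) that is invariant: Σᵢ μᵢ q_{ij} = 0 for every j. Let Φ : Fin m → ℝⁿ and define F : Fin m → ℝⁿ componentwise by F(i) := −(QΦ)(i), i.e. each coordinate F_l(i) = −Σⱼ q_{ij} Φ_l(j). Then the n × n matrix A := Σᵢ μᵢ ( F(i) Φ(i)ᵀ + Φ(i) F(i)ᵀ ) is positive semidefinite: ⟨A z, z⟩ ≥ 0 for all z ∈ ℝⁿ. -/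
/-- Nonnegativity of the CLT diffusion matrix: if `F(i) = −(QΦ)(i)` componentwise for a
conservative `Q`-matrix `Q` with invariant probability vector `μ`, then the matrix
`A := Σᵢ μᵢ (F(i)Φ(i)ᵀ + Φ(i)F(i)ᵀ)` is positive semidefinite. -/
theorem clt_diffusion_matrix_posSemidef {m n : ℕ} (Q : Matrix (Fin m) (Fin m) ℝ)
    (hoff : ∀ i j, i ≠ j → 0 ≤ Q i j)
    (hrow : ∀ i, ∑ j, Q i j = 0)
    (μ : Fin m → ℝ)
    (hμ0 : ∀ i, 0 ≤ μ i) (hμ1 : ∑ i, μ i = 1)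
    (hinv : ∀ j, ∑ i, μ i * Q i j = 0)
    (Φ : Fin m → Fin n → ℝ)
    (F : Fin m → Fin n → ℝ)
    (hF : ∀ i l, F i l = -(Q.mulVec (fun j => Φ j l) i))
    (A : Matrix (Fin n) (Fin n) ℝ)
    (hA : ∀ k l, A k l = ∑ i, μ i * (F i k * Φ i l + Φ i k * F i l)) :
    ∀ z : Fin n → ℝ, 0 ≤ ∑ k, z k * A.mulVec z k := by
  intro z
  set g : Fin m → ℝ := fun i => ∑ l, Φ i l * z l with hgdef
  have hg : ∀ i, g i = ∑ l, Φ i l * z l := fun i => rfl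
  have hfz : ∀ i, (∑ k, F i k * z k) = -∑ j, Q i j * g j := by
    intro i
    simp only [hF, Matrix.mulVec, dotProduct, neg_mul, Finset.sum_neg_distrib,
      Finset.sum_mul, neg_inj]
    rw [Finset.sum_comm]
    refine Finset.sum_congr rfl fun j _ => ?_
    rw [hg, Finset.mul_sum]
    refine Finset.sum_congr rfl fun k _ => ?_
    ring
  have h1 : ∑ k, z k * A.mulVec z k = ∑ i, (2 * μ i) * ((∑ k, F i k * z k) * g i) := by
    calc ∑ k, z k * A.mulVec z k
        = ∑ y, ∑ x, ∑ i, z x * (μ i * (F i x * Φ i y + Φ i x * F i y) * z y) := by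
          simp only [Matrix.mulVec, dotProduct, hA, Finset.mul_sum, Finset.sum_mul]
          rw [Finset.sum_comm]
      _ = ∑ x, ∑ y, ∑ i, z x * (μ i * (F i x * Φ i y + Φ i x * F i y) * z y) := by
          rw [Finset.sum_comm]
      _ = ∑ x, ∑ i, ∑ y, z x * (μ i * (F i x * Φ i y + Φ i x * F i y) * z y) := by
          exact Finset.sum_congr rfl fun x _ => by rw [Finset.sum_comm]
      _ = ∑ i, ∑ x, ∑ y, z x * (μ i * (F i x * Φ i y + Φ i x * F i y) * z y) := by
          rw [Finset.sum_comm]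
      _ = ∑ i, (∑ x, ∑ y, μ i * ((F i x * z x) * (Φ i y * z y))
              + ∑ x, ∑ y, μ i * ((Φ i x * z x) * (F i y * z y))) := by
          refine Finset.sum_congr rfl fun i _ => ?_
          rw [← Finset.sum_add_distrib]
          refine Finset.sum_congr rfl fun x _ => ?_
          rw [← Finset.sum_add_distrib]
          exact Finset.sum_congr rfl fun y _ => by ring
      _ = ∑ i, (2 * μ i) * ((∑ k, F i k * z k) * g i) := by
          refine Finset.sum_congr rfl fun i _ => ?_
          rw [show (∑ x, ∑ y, μ i * ((Φ i x * z x) * (F i y * z y)))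
              = ∑ y, ∑ x, μ i * ((Φ i x * z x) * (F i y * z y)) from Finset.sum_comm]
          rw [hg, Finset.sum_mul_sum, Finset.mul_sum, ← Finset.sum_add_distrib]
          refine Finset.sum_congr rfl fun k _ => ?_
          rw [← Finset.sum_add_distrib, Finset.mul_sum]
          apply Finset.sum_congr rfl
          intro l _
          ring
  have h2 : ∑ k, z k * A.mulVec z k
      = ∑ i, ∑ j, (-2) * (μ i * Q i j * (g i * g j)) := by
    rw [h1]
    refine Finset.sum_congr rfl fun i _ => ?_
    rw [hfz i, ← Finset.sum_neg_distrib, Finset.sum_mul, Finset.mul_sum]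
    refine Finset.sum_congr rfl fun j _ => ?_
    ring
  have key : ∑ k, z k * A.mulVec z k
      = ∑ i, ∑ j, μ i * Q i j * (g i - g j) ^ 2 := by
    rw [h2]
    have e1 : ∑ i, ∑ j, μ i * Q i j * (g i)^2 = 0 := by
      refine Finset.sum_eq_zero fun i _ => ?_
      have : ∑ j, μ i * Q i j * (g i)^2 = (μ i * (g i)^2) * ∑ j, Q i j := by
        rw [Finset.mul_sum]; exact Finset.sum_congr rfl fun j _ => by ring
      rw [this, hrow, mul_zero]
    have e2 : ∑ i, ∑ j, μ i * Q i j * (g j)^2 = 0 := by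
      rw [Finset.sum_comm]
      refine Finset.sum_eq_zero fun j _ => ?_
      have : ∑ i, μ i * Q i j * (g j)^2 = (g j)^2 * ∑ i, μ i * Q i j := by
        rw [Finset.mul_sum]; exact Finset.sum_congr rfl fun i _ => by ring
      rw [this, hinv, mul_zero]
    have expand : ∑ i, ∑ j, μ i * Q i j * (g i - g j) ^ 2
        = (∑ i, ∑ j, μ i * Q i j * (g i)^2)
          + (∑ i, ∑ j, (-2) * (μ i * Q i j * (g i * g j)))
          + (∑ i, ∑ j, μ i * Q i j * (g j)^2) := by
      rw [← Finset.sum_add_distrib, ← Finset.sum_add_distrib]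
      refine Finset.sum_congr rfl fun i _ => ?_
      rw [← Finset.sum_add_distrib, ← Finset.sum_add_distrib]
      exact Finset.sum_congr rfl fun j _ => by ring
    rw [expand, e1, e2, zero_add, add_zero]
  rw [key]
  refine Finset.sum_nonneg fun i _ => Finset.sum_nonneg fun j _ => ?_
  rcases eq_or_ne i j with rfl | hij
  · simp
  · exact mul_nonneg (mul_nonneg (hμ0 i) (hoff i j hij)) (sq_nonneg _)
end

section
/- Let A : ℝⁿ → Matrix (Fin d) (Fin d) ℝ be such that every A(x) is symmetric positive semidefinite, A is uniformly elliptic (there exists c > 0 with ⟨A(x)z, z⟩ ≥ c|z|² for all x ∈ ℝⁿ and z ∈ ℝ^d), and A is Lipschitz: ‖A(x) − A(y)‖ ≤ L|x − y| for all x, y (operator norm). Then the map x ↦ A(x)^{1/2}, where A(x)^{1/2} is the unique symmetric positive semidefinite square root of A(x), is Lipschitz: there exists L' > 0 such that ‖A(x)^{1/2} − A(y)^{1/2}‖ ≤ L'|x − y| for all x, y ∈ ℝⁿ. -/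
open scoped Matrix.Norms.L2Operator

open scoped ComplexOrder in
/-- The positive semidefinite square root of a positive semidefinite matrix
(the definition that Mathlib carried under this name in December 2024). -/
noncomputable def Matrix.PosSemidef.sqrt {n 𝕜 : Type*} [Fintype n] [DecidableEq n] [RCLike 𝕜]
    {A : Matrix n n 𝕜} (hA : A.PosSemidef) : Matrix n n 𝕜 :=
  hA.1.eigenvectorUnitary.1 * Matrix.diagonal ((↑) ∘ (Real.sqrt ∘ hA.1.eigenvalues))
    * (star hA.1.eigenvectorUnitary : Matrix n n 𝕜)

/-!
If `P, Q ≥ s` are self-adjoint, then `P² - Q² = (P - Q) P + Q (P - Q)`. Testing this identity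
against a unit eigenvector `v` of `P - Q` whose eigenvalue `μ` satisfies `|μ| = ‖P - Q‖` gives
`⟪v, (P² - Q²) v⟫ = μ (⟪v, P v⟫ + ⟪v, Q v⟫)`, and the right-hand side has modulus at least
`2 s ‖P - Q‖`. For `P = A(x)^{1/2}` and `Q = A(y)^{1/2}` ellipticity gives `s = √c`, so the square
root is Lipschitz with constant `L / (2√c)`.
-/

open scoped InnerProductSpace MatrixOrder ComplexOrder

section Operator

open RCLike ContinuousLinearMap

variable {𝕜 E : Type*} [RCLike 𝕜] [NormedAddCommGroup E] [InnerProductSpace 𝕜 E]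

-- The spectral radius of a self-adjoint operator is its norm, and in finite dimension every
-- point of the spectrum is an eigenvalue, real by symmetry.
lemma LinearMap.IsSymmetric.exists_eigenvector_abs_eq_norm [FiniteDimensional 𝕜 E]
    [Nontrivial E] {T : E →L[𝕜] E} (hT : (T : E →ₗ[𝕜] E).IsSymmetric) :
    ∃ (μ : ℝ) (v : E), ‖v‖ = 1 ∧ T v = (μ : 𝕜) • v ∧ |μ| = ‖T‖ := by
  have : CompleteSpace E := FiniteDimensional.complete 𝕜 E
  have hne : (spectrum 𝕜 T).Nonempty := by
    rw [spectrum_eq]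
    exact ⟨_, hT.hasEigenvalue_iSup_of_finiteDimensional.mem_spectrum⟩
  obtain ⟨μ, hμ, hnorm⟩ := spectrum.exists_nnnorm_eq_spectralRadius_of_nonempty hne
  rw [spectralRadius_eq_nnnorm T hT.isSelfAdjoint, ENNReal.coe_inj] at hnorm
  rw [spectrum_eq, ← Module.End.hasEigenvalue_iff_mem_spectrum] at hμ
  obtain ⟨v, hv⟩ := hμ.exists_hasEigenvector
  have hTv : T v = μ • v := hv.apply_eq_smul
  have hreal : (re μ : 𝕜) = μ := conj_eq_iff_re.mp (hT.conj_eigenvalue_eq_self hμ)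
  refine ⟨re μ, (‖v‖⁻¹ : 𝕜) • v, ?_, ?_, ?_⟩
  · simp [norm_smul, hv.2]
  · rw [map_smul, hreal, hTv, smul_comm]
  · rw [← norm_ofReal (K := 𝕜), hreal, ← coe_nnnorm, hnorm, coe_nnnorm]

namespace ContinuousLinearMap

variable {P Q : E →L[𝕜] E} {s : ℝ}

lemma mul_norm_sq_le_re_inner_of_algebraMap_le (hP : algebraMap 𝕜 (E →L[𝕜] E) s ≤ P) (v : E) :
    s * ‖v‖ ^ 2 ≤ re ⟪v, P v⟫_𝕜 := by
  have := (le_def _ _ |>.mp hP).re_inner_nonneg_right v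
  rwa [sub_apply, algebraMap_apply, inner_sub_right, inner_smul_right,
    inner_self_eq_norm_sq_to_K, map_sub, re_ofReal_mul, ← ofReal_pow, ofReal_re,
    sub_nonneg] at this

lemma isSymmetric_of_algebraMap_le (hP : algebraMap 𝕜 (E →L[𝕜] E) s ≤ P) : P.IsSymmetric := by
  intro x y
  simpa [inner_smul_left, inner_smul_right, inner_sub_left, inner_sub_right]
    using (le_def _ _ |>.mp hP).isSymmetric x y

lemma two_mul_mul_abs_le_norm_sq_sub_sq {μ : ℝ} {v : E}
    (hP : algebraMap 𝕜 (E →L[𝕜] E) s ≤ P) (hQ : algebraMap 𝕜 (E →L[𝕜] E) s ≤ Q)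
    (hv : ‖v‖ = 1) (hμ : (P - Q) v = (μ : 𝕜) • v) :
    2 * s * |μ| ≤ ‖P ^ 2 - Q ^ 2‖ := by
  set w := ⟪v, P v⟫_𝕜 + ⟪v, Q v⟫_𝕜
  have hPQ : (P - Q).IsSymmetric :=
    (isSymmetric_of_algebraMap_le hP).sub (isSymmetric_of_algebraMap_le hQ)
  have hform : ⟪v, (P ^ 2 - Q ^ 2) v⟫_𝕜 = μ * w := by
    have hfactor : P ^ 2 - Q ^ 2 = (P - Q) * P + Q * (P - Q) := by noncomm_ring
    rw [hfactor, add_apply, mul_apply_eq_comp, mul_apply_eq_comp, inner_add_right, ← coe_coe,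
      ← hPQ, coe_coe, hμ, map_smul, inner_smul_left, inner_smul_right, conj_ofReal, mul_add]
  have hw : 2 * s ≤ re w := by
    have hPv := mul_norm_sq_le_re_inner_of_algebraMap_le hP v
    have hQv := mul_norm_sq_le_re_inner_of_algebraMap_le hQ v
    rw [hv] at hPv hQv
    simp only [w, map_add]
    linarith
  calc 2 * s * |μ| ≤ |μ| * ‖w‖ := by
        rw [mul_comm]
        exact mul_le_mul_of_nonneg_left (hw.trans (re_le_norm w)) (abs_nonneg μ)
    _ = ‖⟪v, (P ^ 2 - Q ^ 2) v⟫_𝕜‖ := by rw [hform, norm_mul, norm_ofReal]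
    _ ≤ ‖P ^ 2 - Q ^ 2‖ * ‖v‖ * ‖v‖ := by grw [norm_inner_le_norm, le_opNorm, mul_comm]
    _ = ‖P ^ 2 - Q ^ 2‖ := by rw [hv, mul_one, mul_one]

theorem two_mul_norm_sub_le_norm_sq_sub_sq [FiniteDimensional 𝕜 E]
    (hP : algebraMap 𝕜 (E →L[𝕜] E) s ≤ P) (hQ : algebraMap 𝕜 (E →L[𝕜] E) s ≤ Q) :
    2 * s * ‖P - Q‖ ≤ ‖P ^ 2 - Q ^ 2‖ := by
  cases subsingleton_or_nontrivial E
  · simp [Subsingleton.elim (P - Q) 0]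
  have hPQ : ((P - Q : E →L[𝕜] E) : E →ₗ[𝕜] E).IsSymmetric :=
    (isSymmetric_of_algebraMap_le hP).sub (isSymmetric_of_algebraMap_le hQ)
  obtain ⟨μ, v, hv, hμ, hnorm⟩ := hPQ.exists_eigenvector_abs_eq_norm
  rw [← hnorm]
  exact two_mul_mul_abs_le_norm_sq_sub_sq hP hQ hv hμ

end ContinuousLinearMap

end Operator

namespace Matrix

variable {n 𝕜 : Type*} [Fintype n] [DecidableEq n] [RCLike 𝕜]

lemma toEuclideanCLM_le_toEuclideanCLM_iff {A B : Matrix n n 𝕜} :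
    toEuclideanCLM (n := n) (𝕜 := 𝕜) A ≤ toEuclideanCLM (n := n) (𝕜 := 𝕜) B ↔ A ≤ B := by
  rw [ContinuousLinearMap.le_def, ← map_sub, ← ContinuousLinearMap.isPositive_toLinearMap_iff,
    coe_toEuclideanCLM_eq_toEuclideanLin, isPositive_toEuclideanLin_iff, le_iff]

lemma toEuclideanCLM_algebraMap (r : ℝ) :
    toEuclideanCLM (n := n) (𝕜 := 𝕜) (algebraMap ℝ _ r) = algebraMap 𝕜 _ r := by
  rw [IsScalarTower.algebraMap_apply ℝ 𝕜, AlgHomClass.commutes]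

theorem two_mul_norm_sub_le_norm_sq_sub_sq {P Q : Matrix n n 𝕜} {s : ℝ}
    (hP : algebraMap ℝ _ s ≤ P) (hQ : algebraMap ℝ _ s ≤ Q) :
    2 * s * ‖P - Q‖ ≤ ‖P ^ 2 - Q ^ 2‖ := by
  rw [← toEuclideanCLM_le_toEuclideanCLM_iff, toEuclideanCLM_algebraMap] at hP hQ
  simpa only [← l2_opNorm_toEuclideanCLM, map_sub, map_pow] using
    ContinuousLinearMap.two_mul_norm_sub_le_norm_sq_sub_sq hP hQ

lemma algebraMap_le_of_forall_le_dotProduct {A : Matrix n n ℝ} {c : ℝ} (hA : A.IsHermitian)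
    (h : ∀ z, c * (z ⬝ᵥ z) ≤ A *ᵥ z ⬝ᵥ z) : algebraMap ℝ _ c ≤ A := by
  refine le_iff.mpr <| .of_dotProduct_mulVec_nonneg
    (hA.sub (IsSelfAdjoint.algebraMap _ (.all c))) fun z ↦ ?_
  simpa [sub_mulVec, dotProduct_comm z, Algebra.algebraMap_eq_smul_one, smul_mulVec] using h z

namespace PosSemidef

variable {A : Matrix n n 𝕜}

lemma sqrt_eq_cfc (hA : A.PosSemidef) : hA.sqrt = cfc Real.sqrt A := by
  rw [hA.1.cfc_eq, IsHermitian.cfc, Unitary.conjStarAlgAut_apply]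
  rfl

lemma sq_sqrt (hA : A.PosSemidef) : hA.sqrt ^ 2 = A := by
  rw [sqrt_eq_cfc, ← cfcₙ_eq_cfc, ← CFC.sqrt_eq_real_sqrt A hA.nonneg, CFC.sq_sqrt A hA.nonneg]

lemma algebraMap_sqrt_le_sqrt (hA : A.PosSemidef) {r : ℝ} (h : algebraMap ℝ _ r ≤ A) :
    algebraMap ℝ _ √r ≤ hA.sqrt := by
  rw [sqrt_eq_cfc]
  exact algebraMap_le_cfc _ _ _ fun x hx ↦
    Real.sqrt_le_sqrt ((algebraMap_le_iff_le_spectrum hA.1).mp h x hx)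

end PosSemidef

end Matrix

theorem posSemidef_sqrt_lipschitz_general {n d : ℕ}
    (A : EuclideanSpace ℝ (Fin n) → Matrix (Fin d) (Fin d) ℝ)
    (hpsd : ∀ x, (A x).PosSemidef)
    (c : ℝ) (hc : 0 < c)
    (hell : ∀ (x : EuclideanSpace ℝ (Fin n)) (z : Fin d → ℝ),
      c * ∑ i, z i ^ 2 ≤ ∑ i, (A x).mulVec z i * z i)
    (L : ℝ) (hLip : ∀ x y, ‖A x - A y‖ ≤ L * ‖x - y‖) :
    ∃ L' > 0, ∀ x y, ‖(hpsd x).sqrt - (hpsd y).sqrt‖ ≤ L' * ‖x - y‖ := by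
  have hlow : ∀ x, algebraMap ℝ _ √c ≤ (hpsd x).sqrt := fun x ↦
    (hpsd x).algebraMap_sqrt_le_sqrt <| Matrix.algebraMap_le_of_forall_le_dotProduct (hpsd x).1
      fun z ↦ by simpa only [dotProduct, sq, mul_comm (z _)] using hell x z
  refine ⟨(|L| + 1) / (2 * √c), by positivity, fun x y ↦ ?_⟩
  have hsq := Matrix.two_mul_norm_sub_le_norm_sq_sub_sq (hlow x) (hlow y)
  rw [(hpsd x).sq_sqrt, (hpsd y).sq_sqrt] at hsq
  have hL : ‖A x - A y‖ ≤ (|L| + 1) * ‖x - y‖ :=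
    (hLip x y).trans (by gcongr; linarith [le_abs_self L])
  rw [div_mul_eq_mul_div, le_div_iff₀ (by positivity)]
  linarith

/-- Lipschitz continuity of the positive semidefinite square root: if `A(x)` is a family of
symmetric positive semidefinite matrices which is uniformly elliptic and Lipschitz in the
operator norm, then `x ↦ A(x)^{1/2}` is Lipschitz in the operator norm. -/
theorem posSemidef_sqrt_lipschitz {n d : ℕ}
    (A : EuclideanSpace ℝ (Fin n) → Matrix (Fin d) (Fin d) ℝ)
    (hsymm : ∀ x, (A x).IsSymm)
    (hpsd : ∀ x, (A x).PosSemidef)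
    (c : ℝ) (hc : 0 < c)
    (hell : ∀ (x : EuclideanSpace ℝ (Fin n)) (z : Fin d → ℝ),
      c * ∑ i, z i ^ 2 ≤ ∑ i, (A x).mulVec z i * z i)
    (L : ℝ) (hLip : ∀ x y, ‖A x - A y‖ ≤ L * ‖x - y‖) :
    ∃ L' > 0, ∀ x y, ‖(hpsd x).sqrt - (hpsd y).sqrt‖ ≤ L' * ‖x - y‖ :=
  posSemidef_sqrt_lipschitz_general A hpsd c hc hell L hLip
end
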